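/- Let μ > 0, δ > 0, and 0 < η < δ. Let g : [0, ∞) → ℝ be continuous with g(0) > δ and suppose g(t) ≤ e^{−μ(t−s)}·g(s) whenever 0 ≤ s ≤ t. Let T* := inf{t ≥ 0 : g(t) ≤ δ} (which is finite), and set Δ := μ^{−1}·log(δ/(δ − η)). Let T ≥ T* + Δ and let h : [0, T] → ℝ satisfy |h(t) − g(t)| ≤ η for all t ∈ [0, T]. Then the set {t ∈ [0, T] : h(t) ≤ δ} is nonempty and its infimum t*_δ satisfies |t*_δ − T*| ≤ Δ. -/
import Mathlib


theorem hitting_time_stability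
    (μ δ η : ℝ) (hμ : 0 < μ) (hδ : 0 < δ) (hη : 0 < η) (hηδ : η < δ)
    (g : ℝ → ℝ) (hgcont : ContinuousOn g (Set.Ici 0)) (hg0 : δ < g 0)
    (hgdecay : ∀ s t : ℝ, 0 ≤ s → s ≤ t → g t ≤ Real.exp (-μ * (t - s)) * g s)
    (Tstar : ℝ) (hTstar : Tstar = sInf {t : ℝ | 0 ≤ t ∧ g t ≤ δ})
    (Δ : ℝ) (hΔ : Δ = μ⁻¹ * Real.log (δ / (δ - η)))
    (T : ℝ) (hT : Tstar + Δ ≤ T)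
    (h : ℝ → ℝ) (hh : ∀ t ∈ Set.Icc (0 : ℝ) T, |h t - g t| ≤ η) :
    ({t ∈ Set.Icc (0 : ℝ) T | h t ≤ δ}).Nonempty ∧
    |sInf {t ∈ Set.Icc (0 : ℝ) T | h t ≤ δ} - Tstar| ≤ Δ := by
  have hδη : 0 < δ - η := by linarith
  have hratio : 1 < δ / (δ - η) := by
    rw [lt_div_iff₀ hδη]; linarith
  have hΔpos : 0 < Δ := by
    rw [hΔ]; exact mul_pos (inv_pos.2 hμ) (Real.log_pos hratio)
  have hexpΔ : Real.exp (-μ * Δ) = (δ - η) / δ := by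
    rw [hΔ]
    have h1 : -μ * (μ⁻¹ * Real.log (δ / (δ - η))) = -Real.log (δ / (δ - η)) := by
      field_simp
    rw [h1, Real.exp_neg, Real.exp_log (by positivity), inv_div]
  -- the continuous hitting set
  set A : Set ℝ := {t : ℝ | 0 ≤ t ∧ g t ≤ δ} with hA
  have hAeq : A = Set.Ici 0 ∩ g ⁻¹' Set.Iic δ := by
    ext t; simp [hA, Set.mem_Ici, Set.mem_Iic]
  have hAclosed : IsClosed A := by
    rw [hAeq]
    exact hgcont.preimage_isClosed_of_isClosed isClosed_Ici isClosed_Iic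
  have hg0pos : 0 < g 0 := lt_trans hδ hg0
  have hAne : A.Nonempty := by
    refine ⟨μ⁻¹ * Real.log (g 0 / δ), ?_, ?_⟩
    · have : 0 < Real.log (g 0 / δ) :=
        Real.log_pos (by rw [lt_div_iff₀ hδ]; linarith)
      positivity
    · have hd := hgdecay 0 (μ⁻¹ * Real.log (g 0 / δ)) le_rfl
        (by have : 0 < Real.log (g 0 / δ) :=
              Real.log_pos (by rw [lt_div_iff₀ hδ]; linarith)
            positivity)
      have he : Real.exp (-μ * (μ⁻¹ * Real.log (g 0 / δ) - 0)) = δ / g 0 := by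
        have h1 : -μ * (μ⁻¹ * Real.log (g 0 / δ) - 0) = -Real.log (g 0 / δ) := by
          field_simp; ring
        rw [h1, Real.exp_neg, Real.exp_log (by positivity), inv_div]
      rw [he] at hd
      calc g (μ⁻¹ * Real.log (g 0 / δ)) ≤ δ / g 0 * g 0 := hd
        _ = δ := by field_simp
  have hAbdd : BddBelow A := ⟨0, fun t ht => ht.1⟩
  have hTmem : Tstar ∈ A := by rw [hTstar]; exact hAclosed.csInf_mem hAne hAbdd
  have hT0 : 0 ≤ Tstar := hTmem.1
  have hgT : g Tstar ≤ δ := hTmem.2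
  have hbelow : ∀ t : ℝ, 0 ≤ t → t < Tstar → δ < g t := by
    intro t ht hlt
    by_contra hc
    push_neg at hc
    have : Tstar ≤ t := by rw [hTstar]; exact csInf_le hAbdd ⟨ht, hc⟩
    linarith
  -- the discrete hitting set
  set S : Set ℝ := {t ∈ Set.Icc (0 : ℝ) T | h t ≤ δ} with hS
  have hτmem : Tstar + Δ ∈ S := by
    have hd := hgdecay Tstar (Tstar + Δ) hT0 (by linarith)
    have he : -μ * (Tstar + Δ - Tstar) = -μ * Δ := by ring
    rw [he, hexpΔ] at hd
    have hgτ : g (Tstar + Δ) ≤ δ - η := by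
      calc g (Tstar + Δ) ≤ (δ - η) / δ * g Tstar := hd
        _ ≤ (δ - η) / δ * δ := by
            apply mul_le_mul_of_nonneg_left hgT (by positivity)
        _ = δ - η := by field_simp
    have hmem : Tstar + Δ ∈ Set.Icc (0 : ℝ) T := ⟨by linarith, hT⟩
    have hhb := (abs_le.1 (hh _ hmem)).2
    exact ⟨hmem, by linarith⟩
  have hSne : S.Nonempty := ⟨Tstar + Δ, hτmem⟩
  have hSbdd : BddBelow S := ⟨0, fun t ht => ht.1.1⟩
  have hupper : sInf S ≤ Tstar + Δ := csInf_le hSbdd hτmem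
  have hlower : Tstar - Δ ≤ sInf S := by
    apply le_csInf hSne
    intro t ht
    by_contra hc
    push_neg at hc
    have ht0 : 0 ≤ t := ht.1.1
    have h1 : t + Δ < Tstar := by linarith
    have h2 : δ < g (t + Δ) := hbelow _ (by linarith) h1
    have hd := hgdecay t (t + Δ) ht0 (by linarith)
    have he : -μ * (t + Δ - t) = -μ * Δ := by ring
    rw [he, hexpΔ] at hd
    have hhb := (abs_le.1 (hh t ht.1)).1
    have hht : h t ≤ δ := ht.2
    have hgt : g t ≤ δ + η := by linarith
    -- δ < (δ-η)/δ * g t  and  g t ≤ δ + η  give contradiction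
    have h3 : δ < (δ - η) / δ * g t := lt_of_lt_of_le h2 hd
    rw [div_mul_eq_mul_div, lt_div_iff₀ hδ] at h3
    nlinarith
  exact ⟨hSne, abs_le.2 ⟨by linarith, by linarith⟩⟩
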